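/- If an a.d.-family 𝒜 contains a 2-Luzin gap, then the splitting partial order ℙ_𝒜 fails to satisfy the c.c.c., i.e., ℙ_𝒜 has an uncountable antichain. In particular, ℙ_𝒜 fails the c.c.c. whenever 𝒜 is a Luzin family. -/

import Mathlib

open Set Filter Cardinal

noncomputable section

/-- The Banach space `ℓ∞` of bounded real sequences with the sup norm. -/
abbrev Linfty : Type := lp (fun _ : ℕ => ℝ) ⊤

/-- An a.d.-family: an uncountable family of infinite subsets of `ℕ` which is
pairwise almost disjoint. -/
def ADFamily (𝒜 : Set (Set ℕ)) : Prop :=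
  ¬𝒜.Countable ∧ (∀ A ∈ 𝒜, A.Infinite) ∧
    ∀ A ∈ 𝒜, ∀ B ∈ 𝒜, A ≠ B → (A ∩ B).Finite

/-- A maximal a.d.-family. -/
def MaximalADFamily (𝒜 : Set (Set ℕ)) : Prop :=
  ADFamily 𝒜 ∧ ∀ X : Set ℕ, X.Infinite → ∃ A ∈ 𝒜, (X ∩ A).Infinite

/-- `A =* B` : the symmetric difference is finite. -/
def eqStar (A B : Set ℕ) : Prop := (symmDiff A B).Finite

/-- Finite subfamilies `a`, `b` of `𝒜` represent the pair `p`. -/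
def Represents (𝒜 : Set (Set ℕ)) (p : Set ℕ × Set ℕ) (a b : Finset (Set ℕ)) : Prop :=
  ↑a ⊆ 𝒜 ∧ ↑b ⊆ 𝒜 ∧ eqStar p.1 (⋃ A ∈ a, A) ∧ eqStar p.2 (⋃ B ∈ b, B)

/-- `p` is a condition of the splitting partial order `ℙ_𝒜`. -/
def SplitCond (𝒜 : Set (Set ℕ)) (p : Set ℕ × Set ℕ) : Prop :=
  p.1 ∩ p.2 = ∅ ∧ ∃ a b : Finset (Set ℕ), Represents 𝒜 p a b

/-- `Extends p q` means `p ≤ q` in `ℙ_𝒜`. -/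
def Extends (p q : Set ℕ × Set ℕ) : Prop := q.1 ⊆ p.1 ∧ q.2 ⊆ p.2

/-- Compatibility in `ℙ_𝒜`. -/
def Compat (𝒜 : Set (Set ℕ)) (p q : Set ℕ × Set ℕ) : Prop :=
  ∃ r, SplitCond 𝒜 r ∧ Extends r p ∧ Extends r q

/-- An antichain of `ℙ_𝒜`: a set of pairwise incompatible conditions. -/
def SplitAntichain (𝒜 : Set (Set ℕ)) (P : Set (Set ℕ × Set ℕ)) : Prop :=
  (∀ p ∈ P, SplitCond 𝒜 p) ∧ ∀ p ∈ P, ∀ q ∈ P, p ≠ q → ¬Compat 𝒜 p q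

/-- `ℙ_𝒜` satisfies the countable chain condition. -/
def SplitCCC (𝒜 : Set (Set ℕ)) : Prop :=
  ∀ P : Set (Set ℕ × Set ℕ), SplitAntichain 𝒜 P → P.Countable

/-- A centered subset of `ℙ_𝒜`: every finite subset has a common lower bound in `ℙ_𝒜`. -/
def SplitCentered (𝒜 : Set (Set ℕ)) (P : Set (Set ℕ × Set ℕ)) : Prop :=
  ∀ F : Finset (Set ℕ × Set ℕ), ↑F ⊆ P →
    ∃ r, SplitCond 𝒜 r ∧ ∀ p ∈ F, Extends r p

/-- `ℙ_𝒜` is σ-centered. -/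
def SplitSigmaCentered (𝒜 : Set (Set ℕ)) : Prop :=
  ∃ P : ℕ → Set (Set ℕ × Set ℕ),
    (⋃ n, P n) = {p | SplitCond 𝒜 p} ∧ ∀ n, SplitCentered 𝒜 (P n)

/-- `ℙ_𝒜` has precaliber `κ`. -/
def SplitPrecaliber (𝒜 : Set (Set ℕ)) (κ : Cardinal) : Prop :=
  ∀ P : Set (Set ℕ × Set ℕ), (∀ p ∈ P, SplitCond 𝒜 p) → #P = κ →
    ∃ Q ⊆ P, #Q = κ ∧ SplitCentered 𝒜 Q

/-- Two conditions are essentially distinct if their (uniquely determined)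
representing finite subfamilies differ on both coordinates. -/
def EssDistinct (𝒜 : Set (Set ℕ)) (p q : Set ℕ × Set ℕ) : Prop :=
  ∀ ap bp aq bq : Finset (Set ℕ), Represents 𝒜 p ap bp → Represents 𝒜 q aq bq →
    ap ≠ aq ∧ bp ≠ bq

/-- An antiramsey a.d.-family. -/
def Antiramsey (𝒜 : Set (Set ℕ)) : Prop :=
  ADFamily 𝒜 ∧
  ∀ P : Set (Set ℕ × Set ℕ), (∀ p ∈ P, SplitCond 𝒜 p) → ¬P.Countable →
    (∀ p ∈ P, ∀ q ∈ P, p ≠ q → EssDistinct 𝒜 p q) →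
    (∃ p ∈ P, ∃ q ∈ P, p ≠ q ∧ Compat 𝒜 p q) ∧ (∃ p ∈ P, ∃ q ∈ P, ¬Compat 𝒜 p q)

/-- The first uncountable ordinal. -/
def omega1 : Ordinal.{0} := (Cardinal.aleph 1).ord

/-- A Luzin family. -/
def IsLuzinFamily (𝒜 : Set (Set ℕ)) : Prop :=
  ADFamily 𝒜 ∧ ∃ A : Ordinal.{0} → Set ℕ,
    (∀ ξ < omega1, A ξ ∈ 𝒜) ∧
    (∀ B ∈ 𝒜, ∃ ξ < omega1, A ξ = B) ∧
    (∀ ξ < omega1, ∀ η < omega1, ξ ≠ η → A ξ ≠ A η) ∧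
    ∀ η < omega1, ∀ m : ℕ, {ξ : Ordinal | ξ < η ∧ sSup (A ξ ∩ A η) = m}.Finite

/-- `(B i : i < n)` forms an `n`-Luzin gap. -/
def IsNLuzinGap (n : ℕ) (B : Fin n → Ordinal.{0} → Set ℕ) : Prop :=
  (∀ i : Fin n, ∀ α < omega1, ∀ β < omega1, α ≠ β → B i α ≠ B i β) ∧
  (∀ i j : Fin n, i ≠ j → ∀ α < omega1, ∀ β < omega1, B i α ≠ B j β) ∧
  ∃ m : ℕ,
    (∀ i j : Fin n, i < j → ∀ α < omega1, B i α ∩ B j α ⊆ Set.Iio m) ∧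
    (∀ α < omega1, ∀ β < omega1, α ≠ β →
      ¬(⋃ (i : Fin n) (j : Fin n) (_ : i ≠ j), B i α ∩ B j β) ⊆ Set.Iio m)

/-- `𝒜` contains an `n`-Luzin gap. -/
def ContainsNLuzinGap (𝒜 : Set (Set ℕ)) (n : ℕ) : Prop :=
  ∃ B : Fin n → Ordinal.{0} → Set ℕ,
    (∀ i : Fin n, ∀ α < omega1, B i α ∈ 𝒜) ∧ IsNLuzinGap n B

-- The characteristic function of `A ⊆ ℕ` as an element of `ℓ∞`.
open Classical in
def indicatorLinfty (A : Set ℕ) : Linfty :=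
  ⟨fun n => if n ∈ A then (1 : ℝ) else 0, by
    apply memℓp_infty
    refine ⟨1, ?_⟩
    rintro x ⟨n, rfl⟩
    dsimp only
    split <;> simp⟩

/-- The subset `c₀` of `ℓ∞`. -/
def c0Set : Set Linfty := {f | Tendsto (fun n => f n) atTop (nhds 0)}

/-- The Johnson–Lindenstrauss space `X_𝒜`: the closed linear span of
`c₀ ∪ {1_A : A ∈ 𝒜}` in `ℓ∞`, as a (closed) submodule. -/
def XA (𝒜 : Set (Set ℕ)) : Submodule ℝ Linfty :=
  (Submodule.span ℝ (c0Set ∪ indicatorLinfty '' 𝒜)).topologicalClosure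

/-- The norm `‖·‖_{∞,2}` on `ℓ∞`. -/
def norm12 (f : Linfty) : ℝ :=
  ‖f‖ + Real.sqrt (∑' n : ℕ, (f n) ^ 2 / 2 ^ (n + 1))

/-- The unit sphere of `(X_𝒜, ‖·‖∞)`. -/
def sphereInf (𝒜 : Set (Set ℕ)) : Set Linfty :=
  {f : Linfty | f ∈ XA 𝒜 ∧ ‖f‖ = 1}

/-- The unit sphere of `(X_𝒜, ‖·‖_{∞,2})`. -/
def sphere12 (𝒜 : Set (Set ℕ)) : Set Linfty :=
  {f : Linfty | f ∈ XA 𝒜 ∧ norm12 f = 1}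

/-- The Open Coloring Axiom. -/
def OCA : Prop :=
  ∀ (X : Type) [MetricSpace X], TopologicalSpace.SeparableSpace X →
    ∀ K : Set (X × X), IsOpen K → (∀ x y : X, (x, y) ∈ K → (y, x) ∈ K) →
      (∃ Y : Set X, ¬Y.Countable ∧ ∀ x ∈ Y, ∀ y ∈ Y, x ≠ y → (x, y) ∈ K) ∨
      (∃ C : ℕ → Set X, (⋃ n, C n) = Set.univ ∧
        ∀ n, ∀ x ∈ C n, ∀ y ∈ C n, x ≠ y → (x, y) ∉ K)

/-- An `ℝ`-embeddable a.d.-family. -/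
def REmbeddable (𝒜 : Set (Set ℕ)) : Prop :=
  ∃ (f : ℕ → ℚ) (r : Set ℕ → ℝ), Function.Injective f ∧
    (∀ A ∈ 𝒜, Irrational (r A) ∧
      ∀ ε : ℝ, 0 < ε → {n ∈ A | ε ≤ |(f n : ℝ) - r A|}.Finite) ∧
    (∀ A ∈ 𝒜, ∀ B ∈ 𝒜, A ≠ B → r A ≠ r B)

/-- The Continuum Hypothesis. -/
def CH : Prop := (Cardinal.continuum : Cardinal.{0}) = Cardinal.aleph 1

end

/-!
A `2`-Luzin gap `(B⁰_α, B¹_α)_{α < ω₁}` with constant `m` yields the uncountable antichain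
`p_α = (B⁰_α \ m, B¹_α \ m)`: for `α ≠ β` some `x ≥ m` lies in `B⁰_α ∩ B¹_β` or in `B¹_α ∩ B⁰_β`,
and a common extension of `p_α` and `p_β` would have to put `x` on both sides.

A Luzin family `(A_ξ)_{ξ < ω₁}` contains a `2`-Luzin gap. Pair `A_{2α}` with `A_{2α+1}` and fix
`m` bounding `A_{2α} ∩ A_{2α+1}` for uncountably many `α`. By the Luzin property, for each `β`
only finitely many `α < β` have `A_{2α} ∩ A_{2β+1} ⊆ m`, and a free-set argument for set
mappings with finite values leaves an uncountable set of `α` on which this never happens.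
-/

open Ordinal

section Uncountable

variable {α : Type*}

theorem exists_not_countable_fiber {S : Set α} (hS : ¬S.Countable) (g : α → ℕ) :
    ∃ n, ¬{x ∈ S | g x = n}.Countable := by
  by_contra! h
  refine hS ((countable_iUnion h).mono fun x hx => mem_iUnion_of_mem (g x) ?_)
  exact ⟨hx, rfl⟩

theorem exists_not_countable_pairwise {S : Set α} (hS : ¬S.Countable) {r : α → α → Prop}
    (hr : ∀ x ∈ S, {y ∈ S | ¬(r x y ∧ r y x)}.Countable) :
    ∃ T ⊆ S, ¬T.Countable ∧ T.Pairwise r := by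
  obtain ⟨M, hM⟩ := zorn_subset {T | T ⊆ S ∧ T.Pairwise r} fun c hcS hc =>
    ⟨⋃₀ c, ⟨sUnion_subset fun T hT => (hcS hT).1, hc.pairwise_sUnion.2 fun T hT => (hcS hT).2⟩,
      fun _ => subset_sUnion_of_mem⟩
  refine ⟨M, hM.prop.1, fun hMc => ?_, hM.prop.2⟩
  have hblocked : (M ∪ ⋃ x ∈ M, {y ∈ S | ¬(r x y ∧ r y x)}).Countable :=
    hMc.union (hMc.biUnion fun x hx => hr x (hM.prop.1 hx))
  obtain ⟨y, hyS, hy⟩ := not_subset.1 fun h => hS (hblocked.mono h)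
  have hyM : y ∉ M := fun h => hy (Or.inl h)
  have hr_y : ∀ x ∈ M, r y x ∧ r x y := fun x hx => by
    by_contra h
    exact hy (Or.inr (mem_biUnion hx ⟨hyS, fun h' => h h'.symm⟩))
  have hins : insert y M ∈ {T | T ⊆ S ∧ T.Pairwise r} :=
    ⟨insert_subset hyS hM.prop.1, hM.prop.2.insert_of_notMem hyM hr_y⟩
  exact hyM (hM.eq_of_subset hins (subset_insert y M) ▸ mem_insert y M)

/-- Either some `γ` lies in uncountably many `F x`, and we discard it and recurse, or each point is
related through `F` to only countably many others, and a maximal free set is uncountable. -/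
theorem exists_not_countable_pairwise_notMem_of_encard_le (n : ℕ) {S : Set α}
    (hS : ¬S.Countable) {F : α → Set α} (hF : ∀ x ∈ S, (F x).encard ≤ n) :
    ∃ T ⊆ S, ¬T.Countable ∧ T.Pairwise fun x y => x ∉ F y := by
  induction n generalizing S F with
  | zero =>
    refine ⟨S, subset_rfl, hS, fun x _ y hy _ hxy => ?_⟩
    rw [encard_eq_zero.1 (nonpos_iff_eq_zero.1 (hF y hy))] at hxy
    exact hxy
  | succ n ih =>
    by_cases hheavy : ∃ γ, ¬{x ∈ S | γ ∈ F x}.Countable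
    · obtain ⟨γ, hγ⟩ := hheavy
      have hF' : ∀ x ∈ {x ∈ S | γ ∈ F x}, (F x \ {γ}).encard ≤ n := fun x hx => by
        have := hF x hx.1
        rw [← encard_sdiff_singleton_add_one hx.2, Nat.cast_add_one] at this
        exact (ENat.add_le_add_iff_right ENat.one_ne_top).1 this
      obtain ⟨T, hTS, hT, hTF⟩ := ih hγ hF'
      refine ⟨T \ {γ}, fun x hx => (hTS hx.1).1, fun h => hT ?_, ?_⟩
      · exact (h.union (countable_singleton γ)).mono fun x hx => by
          by_cases hxγ : x = γ <;> simp [hxγ, hx]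
      · exact fun x hx y hy hxy hxFy => hTF hx.1 hy.1 hxy ⟨hxFy, hx.2⟩
    · push Not at hheavy
      refine exists_not_countable_pairwise hS fun x hx => ?_
      refine ((hheavy x).union (finite_of_encard_le_coe (hF x hx)).countable).mono ?_
      rintro y ⟨hyS, hxy⟩
      by_cases hxFy : x ∈ F y
      · exact Or.inl ⟨hyS, hxFy⟩
      · exact Or.inr (not_not.1 fun h => hxy ⟨hxFy, h⟩)

theorem exists_not_countable_pairwise_notMem {S : Set α} (hS : ¬S.Countable)
    {F : α → Set α} (hF : ∀ x ∈ S, (F x).Finite) :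
    ∃ T ⊆ S, ¬T.Countable ∧ T.Pairwise fun x y => x ∉ F y := by
  obtain ⟨n, hn⟩ := exists_not_countable_fiber hS fun x => (F x).ncard
  obtain ⟨T, hTS, hT, hTF⟩ := exists_not_countable_pairwise_notMem_of_encard_le n hn
    fun x hx => by rw [← (hF x hx.1).cast_ncard_eq, hx.2]
  exact ⟨T, hTS.trans (sep_subset _ _), hT, hTF⟩

end Uncountable

section Omega1

theorem omega1_eq_omega_one : omega1 = ω₁ := Cardinal.ord_aleph 1

theorem countable_Iio_iff_lt_omega1 {o : Ordinal.{0}} : (Iio o).Countable ↔ o < omega1 := by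
  rw [← Cardinal.le_aleph0_iff_set_countable, Cardinal.mk_Iio_ordinal, Cardinal.lift_le_aleph0,
    omega1, Cardinal.lt_ord, ← Cardinal.succ_aleph0, Order.lt_succ_iff]

theorem not_countable_Iio_omega1 : ¬(Iio omega1).Countable :=
  fun h => (countable_Iio_iff_lt_omega1.1 h).false

theorem natCast_lt_omega1 (n : ℕ) : (n : Ordinal) < omega1 := by
  rw [omega1_eq_omega_one]
  exact (natCast_lt_omega0 n).trans omega0_lt_omega_one

theorem two_mul_add_natCast_lt_omega1 {α : Ordinal.{0}} (hα : α < omega1) (i : ℕ) :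
    2 * α + i < omega1 :=
  isPrincipal_add_ord (Cardinal.aleph0_le_aleph 1)
    (isPrincipal_mul_ord (Cardinal.aleph0_le_aleph 1)
      (by exact_mod_cast natCast_lt_omega1 2) hα) (natCast_lt_omega1 i)

theorem two_mul_add_natCast_inj {α β : Ordinal} {i j : ℕ} (hi : i < 2) (hj : j < 2) :
    2 * α + i = 2 * β + j ↔ α = β ∧ i = j := by
  refine ⟨fun h => ⟨?_, ?_⟩, fun ⟨hαβ, hij⟩ => hαβ ▸ hij ▸ rfl⟩
  · have hdiv := congrArg (· / 2) h
    rwa [mul_add_div _ two_ne_zero, mul_add_div _ two_ne_zero,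
      div_eq_zero_of_lt (by exact_mod_cast hi), div_eq_zero_of_lt (by exact_mod_cast hj),
      add_zero, add_zero] at hdiv
  · have hmod := congrArg (· % 2) h
    rwa [mul_add_mod_self, mul_add_mod_self, mod_eq_of_lt (by exact_mod_cast hi),
      mod_eq_of_lt (by exact_mod_cast hj), Nat.cast_inj] at hmod

theorem exists_mapsTo_injOn_Iio_omega1 {T : Set Ordinal.{0}} (hT : ¬T.Countable) :
    ∃ e : Ordinal.{0} → Ordinal.{0}, MapsTo e (Iio omega1) T ∧ InjOn e (Iio omega1) := by
  have hle : #(Iio omega1) ≤ #T := by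
    rw [Cardinal.mk_Iio_ordinal, omega1, Cardinal.card_ord, Cardinal.lift_aleph, Ordinal.lift_one,
      Cardinal.aleph_one_le_iff, ← not_le, Cardinal.le_aleph0_iff_set_countable]
    exact hT
  obtain ⟨f⟩ := hle
  refine ⟨fun α => if h : α < omega1 then f ⟨α, h⟩ else 0, fun α hα => ?_, fun α hα β hβ h => ?_⟩
  · simp only [dif_pos (mem_Iio.1 hα), Subtype.coe_prop]
  · simp only [dif_pos (mem_Iio.1 hα), dif_pos (mem_Iio.1 hβ)] at h
    exact congrArg Subtype.val (f.injective (Subtype.ext h))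

end Omega1

section SplittingOrder

variable {𝒜 : Set (Set ℕ)}

theorem eqStar_sdiff_of_finite (A : Set ℕ) {s : Set ℕ} (hs : s.Finite) : eqStar (A \ s) A :=
  hs.subset fun x hx => by
    by_contra h
    simp [mem_symmDiff, h] at hx

theorem Compat.symm {p q : Set ℕ × Set ℕ} (h : Compat 𝒜 p q) : Compat 𝒜 q p :=
  let ⟨r, hr, hrp, hrq⟩ := h
  ⟨r, hr, hrq, hrp⟩

theorem compat_self {p : Set ℕ × Set ℕ} (hp : SplitCond 𝒜 p) : Compat 𝒜 p p :=
  ⟨p, hp, ⟨subset_rfl, subset_rfl⟩, ⟨subset_rfl, subset_rfl⟩⟩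

theorem not_compat_of_mem_fst_of_mem_snd {p q : Set ℕ × Set ℕ} {x : ℕ} (hp : x ∈ p.1)
    (hq : x ∈ q.2) : ¬Compat 𝒜 p q := by
  rintro ⟨r, ⟨hr, -⟩, hrp, hrq⟩
  exact eq_empty_iff_forall_notMem.1 hr x ⟨hrp.1 hp, hrq.2 hq⟩

theorem splitCond_sdiff_Iio {A B : Set ℕ} (hA : A ∈ 𝒜) (hB : B ∈ 𝒜) {m : ℕ}
    (hAB : A ∩ B ⊆ Iio m) : SplitCond 𝒜 (A \ Iio m, B \ Iio m) := by
  refine ⟨?_, {A}, {B}, by simpa using hA, by simpa using hB, ?_, ?_⟩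
  · exact eq_empty_iff_forall_notMem.2 fun x ⟨⟨hxA, hxm⟩, hxB, _⟩ => hxm (hAB ⟨hxA, hxB⟩)
  · simpa using eqStar_sdiff_of_finite A (finite_Iio m)
  · simpa using eqStar_sdiff_of_finite B (finite_Iio m)

theorem exists_splitAntichain_of_pairwise_not_compat {ι : Type*} {I : Set ι}
    (hI : ¬I.Countable) {p : ι → Set ℕ × Set ℕ} (hp : ∀ i ∈ I, SplitCond 𝒜 (p i))
    (hpI : I.Pairwise fun i j => ¬Compat 𝒜 (p i) (p j)) :
    ∃ P, SplitAntichain 𝒜 P ∧ ¬P.Countable := by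
  have hinj : InjOn p I := fun i hi j hj hij => by
    by_contra hne
    exact hpI hi hj hne (by rw [hij]; exact compat_self (hp j hj))
  refine ⟨p '' I, ⟨forall_mem_image.2 hp, ?_⟩,
    fun h => hI (countable_of_injective_of_countable_image hinj h)⟩
  rintro _ ⟨i, hi, rfl⟩ _ ⟨j, hj, rfl⟩ hne
  exact hpI hi hj fun h => hne (h ▸ rfl)

theorem ContainsNLuzinGap.exists_splitAntichain (h : ContainsNLuzinGap 𝒜 2) :
    ∃ P, SplitAntichain 𝒜 P ∧ ¬P.Countable := by
  obtain ⟨B, hB𝒜, -, -, m, hdiag, hcross⟩ := h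
  have hincompat : (Iio omega1).Pairwise fun α β =>
      ¬Compat 𝒜 (B 0 α \ Iio m, B 1 α \ Iio m) (B 0 β \ Iio m, B 1 β \ Iio m) := by
    intro α hα β hβ hαβ
    obtain ⟨x, hx, hxm⟩ := not_subset.1 (hcross α hα β hβ hαβ)
    simp only [mem_iUnion] at hx
    obtain ⟨i, j, hij, hxi, hxj⟩ := hx
    fin_cases i <;> fin_cases j
    · exact absurd rfl hij
    · apply not_compat_of_mem_fst_of_mem_snd (x := x)
      exacts [⟨hxi, hxm⟩, ⟨hxj, hxm⟩]
    · refine fun h => absurd h.symm (not_compat_of_mem_fst_of_mem_snd (x := x) ?_ ?_)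
      exacts [⟨hxj, hxm⟩, ⟨hxi, hxm⟩]
    · exact absurd rfl hij
  exact exists_splitAntichain_of_pairwise_not_compat not_countable_Iio_omega1
    (fun α hα => splitCond_sdiff_Iio (hB𝒜 0 α hα) (hB𝒜 1 α hα) (hdiag 0 1 zero_lt_one α hα))
    hincompat

end SplittingOrder

section Luzin

variable {A : Ordinal.{0} → Set ℕ}

theorem finite_setOf_lt_inter_subset_Iio {η : Ordinal.{0}}
    (hA : ∀ m : ℕ, {ξ : Ordinal | ξ < η ∧ sSup (A ξ ∩ A η) = m}.Finite) (k : ℕ) :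
    {ξ | ξ < η ∧ A ξ ∩ A η ⊆ Iio k}.Finite := by
  refine ((finite_Iic k).biUnion fun c _ => hA c).subset fun ξ ⟨hξη, hξk⟩ => ?_
  exact mem_biUnion (x := sSup (A ξ ∩ A η)) (csSup_le' fun x hx => (hξk hx).le) ⟨hξη, rfl⟩

theorem exists_not_countable_forall_lt_not_inter_subset
    (hA : ∀ η < omega1, ∀ k : ℕ, {ξ | ξ < η ∧ A ξ ∩ A η ⊆ Iio k}.Finite)
    {S : Set Ordinal.{0}} (hS : ¬S.Countable) (hSω : S ⊆ Iio omega1) (m : ℕ) :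
    ∃ T ⊆ S, ¬T.Countable ∧
      ∀ α ∈ T, ∀ β ∈ T, α < β → ¬A (2 * α) ∩ A (2 * β + 1) ⊆ Iio m := by
  obtain ⟨T, hTS, hT, hTF⟩ := exists_not_countable_pairwise_notMem hS
    (F := fun β => {α | α < β ∧ A (2 * α) ∩ A (2 * β + 1) ⊆ Iio m}) fun β hβ => by
      have hβ' : 2 * β + 1 < omega1 := by
        simpa using two_mul_add_natCast_lt_omega1 (hSω hβ) 1
      refine ((hA _ hβ' m).preimage (mul_right_injective₀ two_ne_zero).injOn).subset ?_
      rintro α ⟨hαβ, hα⟩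
      exact ⟨(mul_lt_mul_of_pos_left hαβ two_pos).trans_le le_self_add, hα⟩
  exact ⟨T, hTS, hT, fun α hα β hβ hαβ h => hTF hα hβ hαβ.ne ⟨hαβ, h⟩⟩

theorem containsNLuzinGap_two_of_not_inter_subset {𝒜 : Set (Set ℕ)} (hA𝒜 : ∀ ξ < omega1, A ξ ∈ 𝒜)
    (hAinj : InjOn A (Iio omega1)) {T : Set Ordinal.{0}} (hT : ¬T.Countable)
    (hTω : T ⊆ Iio omega1) {m : ℕ} (hdiag : ∀ α ∈ T, A (2 * α) ∩ A (2 * α + 1) ⊆ Iio m)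
    (hcross : ∀ α ∈ T, ∀ β ∈ T, α < β → ¬A (2 * α) ∩ A (2 * β + 1) ⊆ Iio m) :
    ContainsNLuzinGap 𝒜 2 := by
  obtain ⟨e, heT, he⟩ := exists_mapsTo_injOn_Iio_omega1 hT
  have hidx : ∀ α < omega1, ∀ i : ℕ, 2 * e α + i < omega1 :=
    fun α hα i => two_mul_add_natCast_lt_omega1 (hTω (heT hα)) i
  have hBinj : ∀ α < omega1, ∀ β < omega1, ∀ i j : Fin 2,
      A (2 * e α + (i : ℕ)) = A (2 * e β + (j : ℕ)) → α = β ∧ i = j := by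
    intro α hα β hβ i j h
    obtain ⟨hαβ, hij⟩ := (two_mul_add_natCast_inj i.isLt j.isLt).1
      (hAinj (hidx α hα i) (hidx β hβ j) h)
    exact ⟨he hα hβ hαβ, Fin.ext hij⟩
  refine ⟨fun i α => A (2 * e α + (i : ℕ)), fun i α hα => hA𝒜 _ (hidx α hα i),
    fun i α hα β hβ hαβ h => hαβ (hBinj α hα β hβ i i h).1,
    fun i j hij α hα β hβ h => hij (hBinj α hα β hβ i j h).2, m, ?_, ?_⟩
  · intro i j hij α hα
    fin_cases i <;> fin_cases j <;> simp at hij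
    simpa using hdiag (e α) (heT hα)
  · intro α hα β hβ hαβ hsub
    rcases lt_or_gt_of_ne (he.ne hα hβ hαβ) with h | h
    · refine hcross _ (heT hα) _ (heT hβ) h fun x hx => hsub ?_
      simp only [mem_iUnion]
      exact ⟨0, 1, by decide, by simpa using hx⟩
    · refine hcross _ (heT hβ) _ (heT hα) h fun x hx => hsub ?_
      simp only [mem_iUnion]
      exact ⟨1, 0, by decide, by simpa using hx.symm⟩

theorem IsLuzinFamily.containsNLuzinGap_two {𝒜 : Set (Set ℕ)} (h : IsLuzinFamily 𝒜) :
    ContainsNLuzinGap 𝒜 2 := by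
  obtain ⟨⟨-, -, hAD⟩, A, hA𝒜, -, hAinj, hLuz⟩ := h
  have hAinj' : InjOn A (Iio omega1) := fun ξ hξ η hη h => by
    by_contra hne
    exact hAinj ξ hξ η hη hne h
  have hfin : ∀ α < omega1, (A (2 * α) ∩ A (2 * α + 1)).Finite := fun α hα => by
    have h0 := two_mul_add_natCast_lt_omega1 hα 0
    have h1 := two_mul_add_natCast_lt_omega1 hα 1
    simp only [Nat.cast_zero, add_zero, Nat.cast_one] at h0 h1
    exact hAD _ (hA𝒜 _ h0) _ (hA𝒜 _ h1) (hAinj'.ne h0 h1 (lt_add_one _).ne)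
  obtain ⟨m, hm⟩ := exists_not_countable_fiber not_countable_Iio_omega1
    fun α => sSup (A (2 * α) ∩ A (2 * α + 1)) + 1
  have hdiag : ∀ α ∈ {α ∈ Iio omega1 | sSup (A (2 * α) ∩ A (2 * α + 1)) + 1 = m},
      A (2 * α) ∩ A (2 * α + 1) ⊆ Iio m := fun α ⟨hα, hαm⟩ x hx =>
    hαm ▸ Nat.lt_succ_of_le (le_csSup (hfin α hα).bddAbove hx)
  obtain ⟨T, hTS, hT, hcross⟩ := exists_not_countable_forall_lt_not_inter_subset
    (fun η hη => finite_setOf_lt_inter_subset_Iio (hLuz η hη)) hm (sep_subset _ _) m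
  exact containsNLuzinGap_two_of_not_inter_subset hA𝒜 hAinj' hT (hTS.trans (sep_subset _ _))
    (fun α hα => hdiag α (hTS hα)) hcross

end Luzin

theorem statement6_general (𝒜 : Set (Set ℕ)) :
    (ContainsNLuzinGap 𝒜 2 →
      ∃ P : Set (Set ℕ × Set ℕ), SplitAntichain 𝒜 P ∧ ¬P.Countable) ∧
    (IsLuzinFamily 𝒜 →
      ∃ P : Set (Set ℕ × Set ℕ), SplitAntichain 𝒜 P ∧ ¬P.Countable) :=
  ⟨ContainsNLuzinGap.exists_splitAntichain,
    fun h => h.containsNLuzinGap_two.exists_splitAntichain⟩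

/-- if an a.d.-family `𝒜` contains a `2`-Luzin gap then `ℙ_𝒜` has an
uncountable antichain; in particular `ℙ_𝒜` fails the c.c.c. whenever `𝒜` is Luzin. -/
theorem statement6 (𝒜 : Set (Set ℕ)) (h𝒜 : ADFamily 𝒜) :
    (ContainsNLuzinGap 𝒜 2 →
      ∃ P : Set (Set ℕ × Set ℕ), SplitAntichain 𝒜 P ∧ ¬P.Countable) ∧
    (IsLuzinFamily 𝒜 →
      ∃ P : Set (Set ℕ × Set ℕ), SplitAntichain 𝒜 P ∧ ¬P.Countable) :=
  statement6_general 𝒜
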